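/- arXiv:2506.19876 — 12 statements merged into one kernel-verified Lean document; each statement's English description precedes it below -/
import Mathlib

section
/- Let R be a commutative ring with 1 ≠ 0 and characteristic 3, and let I be a proper ideal of R such that for each a ∈ R, a^3 ∈ I implies either a ∈ I or a^2 ∈ I. Then I is a cdf-absorbing ideal of R. -/
/-- A proper ideal `I` of a commutative ring `R` is a cubes-difference factor absorbing
ideal (cdf-absorbing ideal) if whenever `a^3 - b^3 ∈ I`, then `a - b ∈ I` or
`a^2 + a*b + b^2 ∈ I`. -/
def IsCdfAbsorbing {R : Type*} [CommRing R] (I : Ideal R) : Prop :=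
  I ≠ ⊤ ∧ ∀ a b : R, a ^ 3 - b ^ 3 ∈ I → a - b ∈ I ∨ a ^ 2 + a * b + b ^ 2 ∈ I

section CharThree

variable {R : Type*} [CommRing R]

theorem sub_pow_three_of_three_eq_zero (h3 : (3 : R) = 0) (a b : R) :
    (a - b) ^ 3 = a ^ 3 - b ^ 3 := by
  linear_combination (a * b ^ 2 - a ^ 2 * b) * h3

theorem sq_add_mul_add_sq_of_three_eq_zero (h3 : (3 : R) = 0) (a b : R) :
    a ^ 2 + a * b + b ^ 2 = (a - b) ^ 2 := by
  linear_combination a * b * h3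

end CharThree

theorem stmt_3_general {R : Type*} [CommRing R] (hchar : (3 : R) = 0)
    (I : Ideal R) (hI : I ≠ ⊤)
    (h : ∀ a : R, a ^ 3 ∈ I → a ∈ I ∨ a ^ 2 ∈ I) : IsCdfAbsorbing I := by
  refine ⟨hI, fun a b hab => ?_⟩
  rw [sq_add_mul_add_sq_of_three_eq_zero hchar]
  exact h (a - b) (by rwa [sub_pow_three_of_three_eq_zero hchar])

theorem stmt_3 {R : Type*} [CommRing R] [Nontrivial R] (hchar : (3 : R) = 0)
    (I : Ideal R) (hI : I ≠ ⊤)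
    (h : ∀ a : R, a ^ 3 ∈ I → a ∈ I ∨ a ^ 2 ∈ I) : IsCdfAbsorbing I :=
  stmt_3_general hchar I hI h
end

section
/- Let R be a commutative ring with 1 ≠ 0 and I a cdf-absorbing ideal of R. Then the following are equivalent: (a) whenever a^3 - b^3 ∈ I for a, b ∈ R, both (a - b)^2 ∈ I and a^2 + a*b + b^2 ∈ I; (b) 3 ∈ I. -/
theorem Ideal.sq_sub_mem_iff_of_three_mem {R : Type*} [CommRing R] {I : Ideal R}
    (h3 : (3 : R) ∈ I) (a b : R) : (a - b) ^ 2 ∈ I ↔ a ^ 2 + a * b + b ^ 2 ∈ I := by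
  rw [show a ^ 2 + a * b + b ^ 2 = (a - b) ^ 2 + 3 * (a * b) by ring,
    I.add_mem_iff_left (I.mul_mem_right _ h3)]

theorem stmt_5_general {R : Type*} [CommRing R] (I : Ideal R)
    (hI : IsCdfAbsorbing I) :
    (∀ a b : R, a ^ 3 - b ^ 3 ∈ I → (a - b) ^ 2 ∈ I ∧ a ^ 2 + a * b + b ^ 2 ∈ I) ↔
      (3 : R) ∈ I := by
  constructor
  · intro h
    have h11 := (h 1 1 (by simp)).2
    norm_num at h11
    exact h11
  · intro h3 a b hab
    rcases hI.2 a b hab with hsub | hsum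
    · have hsq := I.pow_mem_of_mem hsub 2 two_pos
      exact ⟨hsq, (I.sq_sub_mem_iff_of_three_mem h3 a b).1 hsq⟩
    · exact ⟨(I.sq_sub_mem_iff_of_three_mem h3 a b).2 hsum, hsum⟩

theorem stmt_5 {R : Type*} [CommRing R] [Nontrivial R] (I : Ideal R)
    (hI : IsCdfAbsorbing I) :
    (∀ a b : R, a ^ 3 - b ^ 3 ∈ I → (a - b) ^ 2 ∈ I ∧ a ^ 2 + a * b + b ^ 2 ∈ I) ↔
      (3 : R) ∈ I :=
  stmt_5_general I hI
end

section
/- Let R be a commutative ring with 1 ≠ 0 in which 3 is a unit, and let I be a proper ideal of R. Then I is a cdf-absorbing ideal of R if and only if I is a *-prime ideal of R. -/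
/-- A proper ideal `I` of `R` is a *-prime ideal if whenever
`b * (a^2 + a*b + b^2) ∈ I`, then `b ∈ I` or `a^2 + a*b + b^2 ∈ I`. -/
def IsStarPrime {R : Type*} [CommRing R] (I : Ideal R) : Prop :=
  I ≠ ⊤ ∧ ∀ a b : R, b * (a ^ 2 + a * b + b ^ 2) ∈ I → b ∈ I ∨ a ^ 2 + a * b + b ^ 2 ∈ I

/-
The substitution `x = a + 2b`, `y = a - b` turns `x - y` into `3b` and `x² + xy + y²` into
`3(a² + ab + b²)`, so `x³ - y³ = 9b(a² + ab + b²)` and `y(x² + xy + y²) = 3(a³ - b³)`.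
When `3` is a unit, multiplying by `3` or `9` does not change membership in `I`, so the
absorbing condition for `(x, y)` is the *-prime condition for `(a, b)` and vice versa.
-/

section

variable {R : Type*} [CommRing R]

theorem sq_add_mul_add_sq_add_two_mul_sub (a b : R) :
    (a + 2 * b) ^ 2 + (a + 2 * b) * (a - b) + (a - b) ^ 2 = 3 * (a ^ 2 + a * b + b ^ 2) := by
  ring

theorem IsCdfAbsorbing.isStarPrime (h3 : IsUnit (3 : R)) {I : Ideal R}
    (hI : IsCdfAbsorbing I) : IsStarPrime I := by
  refine ⟨hI.1, fun a b hab => ?_⟩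
  have hcube : (a + 2 * b) ^ 3 - (a - b) ^ 3 ∈ I := by
    have e : (a + 2 * b) ^ 3 - (a - b) ^ 3 = 3 * (3 * (b * (a ^ 2 + a * b + b ^ 2))) := by ring
    exact e ▸ I.mul_mem_left _ (I.mul_mem_left _ hab)
  rcases hI.2 _ _ hcube with hdiff | hform
  · left
    rwa [show a + 2 * b - (a - b) = 3 * b by ring, I.unit_mul_mem_iff_mem h3] at hdiff
  · right
    rwa [sq_add_mul_add_sq_add_two_mul_sub, I.unit_mul_mem_iff_mem h3] at hform

theorem IsStarPrime.isCdfAbsorbing (h3 : IsUnit (3 : R)) {I : Ideal R}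
    (hI : IsStarPrime I) : IsCdfAbsorbing I := by
  refine ⟨hI.1, fun a b hab => ?_⟩
  have hprod : (a - b) * ((a + 2 * b) ^ 2 + (a + 2 * b) * (a - b) + (a - b) ^ 2) ∈ I := by
    rw [sq_add_mul_add_sq_add_two_mul_sub,
      show (a - b) * (3 * (a ^ 2 + a * b + b ^ 2)) = 3 * (a ^ 3 - b ^ 3) by ring]
    exact I.mul_mem_left _ hab
  refine (hI.2 _ _ hprod).imp id fun hform => ?_
  rwa [sq_add_mul_add_sq_add_two_mul_sub, I.unit_mul_mem_iff_mem h3] at hform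

end

theorem stmt_6_general {R : Type*} [CommRing R] (h3 : IsUnit (3 : R))
    (I : Ideal R) : IsCdfAbsorbing I ↔ IsStarPrime I :=
  ⟨IsCdfAbsorbing.isStarPrime h3, IsStarPrime.isCdfAbsorbing h3⟩

theorem stmt_6 {R : Type*} [CommRing R] [Nontrivial R] (h3 : IsUnit (3 : R))
    (I : Ideal R) (hI : I ≠ ⊤) : IsCdfAbsorbing I ↔ IsStarPrime I :=
  stmt_6_general h3 I
end

section
/- Let R be a commutative ring with 1 ≠ 0, I a cdf-absorbing ideal of R, and S a multiplicatively closed subset of R with I ∩ S = ∅. Then the localized ideal S⁻¹I is a cdf-absorbing ideal of the localization S⁻¹R. -/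
/-!
Multiplying `a, b` by a unit multiplies `a ^ 3 - b ^ 3`, `a - b` and `a ^ 2 + a * b + b ^ 2` by
units, so a common denominator can be cleared and `a, b` taken in the image of `R`. There,
`algebraMap z ∈ S⁻¹I` means `u * z ∈ I` for some `u ∈ S`, and `u ^ 2` times `u * (x ^ 3 - y ^ 3)`
is the cube difference of `u * x, u * y`, to which the property of `I` applies.
-/

def CdfAbsorbs {R : Type*} [CommRing R] (J : Ideal R) (a b : R) : Prop :=
  a ^ 3 - b ^ 3 ∈ J → a - b ∈ J ∨ a ^ 2 + a * b + b ^ 2 ∈ J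

theorem cdfAbsorbs_unit_mul_iff {R : Type*} [CommRing R] (J : Ideal R) {v : R} (hv : IsUnit v)
    (a b : R) : CdfAbsorbs J (v * a) (v * b) ↔ CdfAbsorbs J a b := by
  have cube : (v * a) ^ 3 - (v * b) ^ 3 = v ^ 3 * (a ^ 3 - b ^ 3) := by ring
  have diff : v * a - v * b = v * (a - b) := by ring
  have sum : (v * a) ^ 2 + v * a * (v * b) + (v * b) ^ 2 = v ^ 2 * (a ^ 2 + a * b + b ^ 2) := by
    ring
  simp only [CdfAbsorbs, cube, diff, sum, Ideal.unit_mul_mem_iff_mem _ hv,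
    Ideal.unit_mul_mem_iff_mem _ (hv.pow _)]

theorem IsCdfAbsorbing.cdfAbsorbs_map_algebraMap {R : Type*} [CommRing R] {I : Ideal R}
    (hI : IsCdfAbsorbing I) (S : Submonoid R) {L : Type*} [CommRing L] [Algebra R L]
    [IsLocalization S L] (x y : R) :
    CdfAbsorbs (I.map (algebraMap R L)) (algebraMap R L x) (algebraMap R L y) := by
  intro hxy
  simp only [← map_pow, ← map_sub, ← map_add, ← map_mul,
    IsLocalization.algebraMap_mem_map_algebraMap_iff S] at hxy ⊢
  obtain ⟨u, hu, hux⟩ := hxy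
  have scaled : (u * x) ^ 3 - (u * y) ^ 3 ∈ I := by
    convert I.mul_mem_left (u ^ 2) hux using 1
    ring
  refine (hI.2 _ _ scaled).imp (fun h ↦ ⟨u, hu, ?_⟩) (fun h ↦ ⟨u ^ 2, pow_mem hu 2, ?_⟩)
  · convert h using 1
    ring
  · convert h using 1
    ring

theorem IsCdfAbsorbing.map_algebraMap {R : Type*} [CommRing R] {I : Ideal R}
    (hI : IsCdfAbsorbing I) (S : Submonoid R) {L : Type*} [CommRing L] [Algebra R L]
    [IsLocalization S L] (hIS : Disjoint (S : Set R) (I : Set R)) :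
    IsCdfAbsorbing (I.map (algebraMap R L)) := by
  refine ⟨(IsLocalization.map_algebraMap_ne_top_iff_disjoint S L I).2 hIS, fun a b ↦ ?_⟩
  obtain ⟨x, y, d, hx, hy⟩ := IsLocalization.surj₂ S L a b
  change CdfAbsorbs _ a b
  rw [← cdfAbsorbs_unit_mul_iff _ (IsLocalization.map_units L d), mul_comm, hx, mul_comm, hy]
  exact hI.cdfAbsorbs_map_algebraMap S x y

theorem stmt_8_general {R : Type*} [CommRing R] (I : Ideal R)
    (hI : IsCdfAbsorbing I) (S : Submonoid R) (hIS : (I : Set R) ∩ (S : Set R) = ∅) :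
    IsCdfAbsorbing (I.map (algebraMap R (Localization S))) :=
  hI.map_algebraMap S (Set.disjoint_iff_inter_eq_empty.2 hIS).symm

theorem stmt_8 {R : Type*} [CommRing R] [Nontrivial R] (I : Ideal R)
    (hI : IsCdfAbsorbing I) (S : Submonoid R) (hIS : (I : Set R) ∩ (S : Set R) = ∅) :
    IsCdfAbsorbing (I.map (algebraMap R (Localization S))) :=
  stmt_8_general I hI S hIS
end

section
/- Let f : R → T be a homomorphism of commutative rings (each with 1 ≠ 0) and J a cdf-absorbing ideal of T. Then f⁻¹(J) is a cdf-absorbing ideal of R. -/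
theorem IsCdfAbsorbing.comap {R T F : Type*} [CommRing R] [CommRing T] [FunLike F R T]
    [RingHomClass F R T] (f : F) {J : Ideal T} (hJ : IsCdfAbsorbing J) :
    IsCdfAbsorbing (J.comap f) := by
  refine ⟨Ideal.comap_ne_top f hJ.1, fun a b hab => ?_⟩
  simp only [Ideal.mem_comap, map_sub, map_add, map_mul, map_pow] at hab ⊢
  exact hJ.2 (f a) (f b) hab

theorem stmt_9_general {R T : Type*} [CommRing R] [CommRing T]
    (f : R →+* T) (J : Ideal T) (hJ : IsCdfAbsorbing J) :
    IsCdfAbsorbing (J.comap f) :=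
  hJ.comap f

theorem stmt_9 {R T : Type*} [CommRing R] [Nontrivial R] [CommRing T] [Nontrivial T]
    (f : R →+* T) (J : Ideal T) (hJ : IsCdfAbsorbing J) :
    IsCdfAbsorbing (J.comap f) :=
  stmt_9_general f J hJ
end

section
/- Let f : R → T be a surjective homomorphism of commutative rings (each with 1 ≠ 0) and I a cdf-absorbing ideal of R containing ker(f). Then the image f(I) is a cdf-absorbing ideal of T. -/
theorem IsCdfAbsorbing.of_comap {R T : Type*} [CommRing R] [CommRing T] {f : R →+* T}
    (hf : Function.Surjective f) {J : Ideal T} (h : IsCdfAbsorbing (J.comap f)) :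
    IsCdfAbsorbing J := by
  obtain ⟨hne, habs⟩ := h
  refine ⟨fun hJ => hne (by rw [hJ, Ideal.comap_top]), fun a b hab => ?_⟩
  obtain ⟨a, rfl⟩ := hf a
  obtain ⟨b, rfl⟩ := hf b
  have hcube : a ^ 3 - b ^ 3 ∈ J.comap f := by simpa only [Ideal.mem_comap, map_sub, map_pow]
  simpa only [Ideal.mem_comap, map_sub, map_add, map_mul, map_pow] using habs a b hcube

theorem Ideal.comap_map_of_surjective_of_ker_le {R T : Type*} [CommRing R] [CommRing T]
    {f : R →+* T} (hf : Function.Surjective f) {I : Ideal R} (hker : RingHom.ker f ≤ I) :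
    (I.map f).comap f = I := by
  rw [Ideal.comap_map_of_surjective' f hf, sup_eq_left.mpr hker]

theorem stmt_10_general {R T : Type*} [CommRing R] [CommRing T]
    (f : R →+* T) (hf : Function.Surjective f) (I : Ideal R)
    (hI : IsCdfAbsorbing I) (hker : RingHom.ker f ≤ I) :
    IsCdfAbsorbing (I.map f) := by
  apply IsCdfAbsorbing.of_comap hf
  rwa [Ideal.comap_map_of_surjective_of_ker_le hf hker]

theorem stmt_10 {R T : Type*} [CommRing R] [Nontrivial R] [CommRing T] [Nontrivial T]
    (f : R →+* T) (hf : Function.Surjective f) (I : Ideal R)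
    (hI : IsCdfAbsorbing I) (hker : RingHom.ker f ≤ I) :
    IsCdfAbsorbing (I.map f) :=
  stmt_10_general f hf I hI hker
end

section
/- Let R be a commutative ring with 1 ≠ 0 and J ⊆ I be ideals of R with I proper. Then I/J is a cdf-absorbing ideal of the quotient ring R/J if and only if I is a cdf-absorbing ideal of R. -/
theorem isCdfAbsorbing_comap_iff {R S : Type*} [CommRing R] [CommRing S] {f : R →+* S}
    (hf : Function.Surjective f) (K : Ideal S) :
    IsCdfAbsorbing (K.comap f) ↔ IsCdfAbsorbing K := by
  simp only [IsCdfAbsorbing, ne_eq, Ideal.comap_eq_top_iff, Ideal.mem_comap, map_sub, map_add,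
    map_mul, map_pow, hf.forall₂]

theorem stmt_12_general {R : Type*} [CommRing R] (I J : Ideal R) (hJI : J ≤ I) :
    IsCdfAbsorbing (I.map (Ideal.Quotient.mk J)) ↔ IsCdfAbsorbing I := by
  rw [← isCdfAbsorbing_comap_iff Ideal.Quotient.mk_surjective, Ideal.comap_map_mk hJI]

theorem stmt_12 {R : Type*} [CommRing R] [Nontrivial R] (I J : Ideal R) (hJI : J ≤ I)
    (hI : I ≠ ⊤) :
    IsCdfAbsorbing (I.map (Ideal.Quotient.mk J)) ↔ IsCdfAbsorbing I :=
  stmt_12_general I J hJI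
end

section
/- Let R₁ and R₂ be commutative rings with 1 ≠ 0 and let I₁, I₂ be non-zero proper ideals of R₁, R₂ respectively. If I₁ × I₂ is a cdf-absorbing ideal of the product ring R₁ × R₂, then I₁ is a cdf-absorbing ideal of R₁ and I₂ is a cdf-absorbing ideal of R₂. -/
/-! Embedding `R₁` as the pairs `(a, 0)` (and `R₂` as the pairs `(0, b)`) turns a cube difference
in `I₁` into one in `I₁ × I₂`, since `0 ∈ I₂`; the factor that `I₁ × I₂` absorbs then lies in `I₁`. -/

section

variable {R₁ R₂ : Type*} [CommRing R₁] [CommRing R₂] {I₁ : Ideal R₁} {I₂ : Ideal R₂}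

theorem IsCdfAbsorbing.of_prod_left (h : IsCdfAbsorbing (I₁.prod I₂)) (hI₁ : I₁ ≠ ⊤) :
    IsCdfAbsorbing I₁ := by
  refine ⟨hI₁, fun a b hab => ?_⟩
  have hcube : (a, (0 : R₂)) ^ 3 - (b, 0) ^ 3 ∈ I₁.prod I₂ := by
    simpa [Ideal.mem_prod] using hab
  simpa [Ideal.mem_prod] using h.2 _ _ hcube

theorem IsCdfAbsorbing.of_prod_right (h : IsCdfAbsorbing (I₁.prod I₂)) (hI₂ : I₂ ≠ ⊤) :
    IsCdfAbsorbing I₂ := by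
  refine ⟨hI₂, fun a b hab => ?_⟩
  have hcube : ((0 : R₁), a) ^ 3 - (0, b) ^ 3 ∈ I₁.prod I₂ := by
    simpa [Ideal.mem_prod] using hab
  simpa [Ideal.mem_prod] using h.2 _ _ hcube

end

theorem stmt_13_general {R₁ R₂ : Type*} [CommRing R₁] [CommRing R₂]
    (I₁ : Ideal R₁) (I₂ : Ideal R₂) (hI₁' : I₁ ≠ ⊤)
    (hI₂' : I₂ ≠ ⊤)
    (h : IsCdfAbsorbing (I₁.prod I₂)) :
    IsCdfAbsorbing I₁ ∧ IsCdfAbsorbing I₂ :=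
  ⟨h.of_prod_left hI₁', h.of_prod_right hI₂'⟩

theorem stmt_13 {R₁ R₂ : Type*} [CommRing R₁] [Nontrivial R₁] [CommRing R₂] [Nontrivial R₂]
    (I₁ : Ideal R₁) (I₂ : Ideal R₂) (hI₁ : I₁ ≠ ⊥) (hI₁' : I₁ ≠ ⊤)
    (hI₂ : I₂ ≠ ⊥) (hI₂' : I₂ ≠ ⊤)
    (h : IsCdfAbsorbing (I₁.prod I₂)) :
    IsCdfAbsorbing I₁ ∧ IsCdfAbsorbing I₂ :=
  stmt_13_general I₁ I₂ hI₁' hI₂' h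
end

section
/- Let R₁ and R₂ be commutative rings with 1 ≠ 0 and let I₁, I₂ be non-zero proper ideals of R₁, R₂ respectively such that I₁ × I₂ is a cdf-absorbing ideal of the product ring R₁ × R₂. If 3 ∉ I₂ and there exist a non-zero i ∈ I₁ and c ∈ R₁ with c^3 = i + 1, then c - 1 ∈ I₁. -/
/-- Test the cdf-absorbing property on `(x, 1)` and `(y, 1)`: the second component of the
square-sum factor is `3 ∉ I₂`, so the difference factor must lie in the ideal. -/
theorem IsCdfAbsorbing.sub_mem_left_of_prod {R₁ R₂ : Type*} [CommRing R₁] [CommRing R₂]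
    {I₁ : Ideal R₁} {I₂ : Ideal R₂} (h : IsCdfAbsorbing (I₁.prod I₂)) (h3 : (3 : R₂) ∉ I₂)
    {x y : R₁} (hxy : x ^ 3 - y ^ 3 ∈ I₁) : x - y ∈ I₁ := by
  have hcube : ((x, 1) : R₁ × R₂) ^ 3 - (y, 1) ^ 3 ∈ I₁.prod I₂ :=
    (Ideal.mem_prod _ _).mpr ⟨hxy, by simp⟩
  rcases h.2 (x, 1) (y, 1) hcube with hdiff | hsq
  · exact ((Ideal.mem_prod _ _).mp hdiff).1
  · refine absurd ((Ideal.mem_prod _ _).mp hsq).2 ?_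
    simpa [show (1 : R₂) + 1 + 1 = 3 by norm_num] using h3

theorem stmt_14_general {R₁ R₂ : Type*} [CommRing R₁] [CommRing R₂]
    (I₁ : Ideal R₁) (I₂ : Ideal R₂)
    (h : IsCdfAbsorbing (I₁.prod I₂)) (h3 : (3 : R₂) ∉ I₂)
    (i : R₁) (hi : i ∈ I₁) (c : R₁) (hc : c ^ 3 = i + 1) :
    c - 1 ∈ I₁ :=
  h.sub_mem_left_of_prod h3 (by simpa [hc] using hi)

theorem stmt_14 {R₁ R₂ : Type*} [CommRing R₁] [Nontrivial R₁] [CommRing R₂] [Nontrivial R₂]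
    (I₁ : Ideal R₁) (I₂ : Ideal R₂) (hI₁ : I₁ ≠ ⊥) (hI₁' : I₁ ≠ ⊤)
    (hI₂ : I₂ ≠ ⊥) (hI₂' : I₂ ≠ ⊤)
    (h : IsCdfAbsorbing (I₁.prod I₂)) (h3 : (3 : R₂) ∉ I₂)
    (i : R₁) (hi : i ∈ I₁) (hi0 : i ≠ 0) (c : R₁) (hc : c ^ 3 = i + 1) :
    c - 1 ∈ I₁ :=
  stmt_14_general I₁ I₂ h h3 i hi c hc
end

section
/- Let R₁ and R₂ be commutative rings with 1 ≠ 0 and let I₁, I₂ be non-zero proper ideals of R₁, R₂ respectively such that I₁ is a cdf-absorbing ideal of R₁, I₂ is a cdf-absorbing ideal of R₂, and 3 ∈ I₂. Then for all a, b ∈ R₁ × R₂ with (a, b) ≠ ((0,0),(0,0)) and a^3 - b^3 ∈ I₁ × I₂, either a^2 + a*b + b^2 ∈ I₁ × I₂ or (a - b)^2 ∈ I₁ × I₂. -/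
/-
On the first factor, cdf-absorption gives `a - b ∈ I₁` (hence `(a - b)^2 ∈ I₁`) or
`a^2 + ab + b^2 ∈ I₁`. On the second factor `3 ∈ I₂`, and
`a^2 + ab + b^2 = (a - b)^2 + 3ab`, so modulo `I₂` the two alternatives coincide and
both hold; the disjunction on the first factor therefore lifts to the product.
-/

namespace Ideal

variable {R : Type*} [CommRing R] {I : Ideal R}

theorem sq_add_mul_add_sq_mem_iff_sub_sq_mem (h3 : (3 : R) ∈ I) (a b : R) :
    a ^ 2 + a * b + b ^ 2 ∈ I ↔ (a - b) ^ 2 ∈ I := by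
  have hdiff : a ^ 2 + a * b + b ^ 2 - (a - b) ^ 2 ∈ I := by
    rw [show a ^ 2 + a * b + b ^ 2 - (a - b) ^ 2 = 3 * (a * b) by ring]
    exact I.mul_mem_right _ h3
  exact ⟨fun h => by simpa using I.sub_mem h hdiff, fun h => by simpa using I.add_mem hdiff h⟩

end Ideal

namespace IsCdfAbsorbing

variable {R : Type*} [CommRing R] {I : Ideal R}

theorem sq_add_mul_add_sq_mem_or_sub_sq_mem (hI : IsCdfAbsorbing I) {a b : R}
    (h : a ^ 3 - b ^ 3 ∈ I) : a ^ 2 + a * b + b ^ 2 ∈ I ∨ (a - b) ^ 2 ∈ I := by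
  rcases hI.2 a b h with hsub | hsum
  · exact Or.inr (I.pow_mem_of_mem hsub 2 two_pos)
  · exact Or.inl hsum

theorem sq_add_mul_add_sq_mem_and_sub_sq_mem (hI : IsCdfAbsorbing I) (h3 : (3 : R) ∈ I)
    {a b : R} (h : a ^ 3 - b ^ 3 ∈ I) : a ^ 2 + a * b + b ^ 2 ∈ I ∧ (a - b) ^ 2 ∈ I := by
  have hiff := Ideal.sq_add_mul_add_sq_mem_iff_sub_sq_mem h3 a b
  rcases hI.sq_add_mul_add_sq_mem_or_sub_sq_mem h with hsum | hsq
  · exact ⟨hsum, hiff.1 hsum⟩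
  · exact ⟨hiff.2 hsq, hsq⟩

end IsCdfAbsorbing

theorem stmt_15_general {R₁ R₂ : Type*} [CommRing R₁] [CommRing R₂]
    (I₁ : Ideal R₁) (I₂ : Ideal R₂)
    (h₁ : IsCdfAbsorbing I₁) (h₂ : IsCdfAbsorbing I₂) (h3 : (3 : R₂) ∈ I₂) :
    ∀ a b : R₁ × R₂, ¬(a = 0 ∧ b = 0) → a ^ 3 - b ^ 3 ∈ I₁.prod I₂ →
      a ^ 2 + a * b + b ^ 2 ∈ I₁.prod I₂ ∨ (a - b) ^ 2 ∈ I₁.prod I₂ := by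
  intro a b _ h
  obtain ⟨hfst, hsnd⟩ := (Ideal.mem_prod _ _).1 h
  obtain ⟨hsum₂, hsq₂⟩ := h₂.sq_add_mul_add_sq_mem_and_sub_sq_mem h3 hsnd
  rcases h₁.sq_add_mul_add_sq_mem_or_sub_sq_mem hfst with hsum₁ | hsq₁
  · exact Or.inl ((Ideal.mem_prod _ _).2 ⟨hsum₁, hsum₂⟩)
  · exact Or.inr ((Ideal.mem_prod _ _).2 ⟨hsq₁, hsq₂⟩)

theorem stmt_15 {R₁ R₂ : Type*} [CommRing R₁] [Nontrivial R₁] [CommRing R₂] [Nontrivial R₂]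
    (I₁ : Ideal R₁) (I₂ : Ideal R₂) (hI₁ : I₁ ≠ ⊥) (hI₁' : I₁ ≠ ⊤)
    (hI₂ : I₂ ≠ ⊥) (hI₂' : I₂ ≠ ⊤)
    (h₁ : IsCdfAbsorbing I₁) (h₂ : IsCdfAbsorbing I₂) (h3 : (3 : R₂) ∈ I₂) :
    ∀ a b : R₁ × R₂, ¬(a = 0 ∧ b = 0) → a ^ 3 - b ^ 3 ∈ I₁.prod I₂ →
      a ^ 2 + a * b + b ^ 2 ∈ I₁.prod I₂ ∨ (a - b) ^ 2 ∈ I₁.prod I₂ :=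
  stmt_15_general I₁ I₂ h₁ h₂ h3
end

section
/- Let R be a commutative ring with 1 ≠ 0 and M a non-zero R-module. Then {0}(+)M, the ideal of the idealization R(+)M consisting of all elements (0, m) with m ∈ M, is a cdf-absorbing ideal of R(+)M if and only if the zero ideal {0} of R is a 2-semi-absorbing ideal of R and {0} is a cdf-absorbing ideal of R. -/
theorem IsCdfAbsorbing.sq_mem_of_pow_three_mem {R : Type*} [CommRing R] {I : Ideal R}
    (hI : IsCdfAbsorbing I) {x : R} (hx : x ^ 3 ∈ I) : x ^ 2 ∈ I := by
  rcases hI.2 x 0 (by simpa using hx) with h | h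
  · exact I.pow_mem_of_mem (by simpa using h) 2 two_pos
  · simpa using h

theorem isCdfAbsorbing_comap_iff_of_surjective {R S : Type*} [CommRing R] [CommRing S]
    {f : R →+* S} (hf : Function.Surjective f) {I : Ideal S} :
    IsCdfAbsorbing (I.comap f) ↔ IsCdfAbsorbing I := by
  simp only [IsCdfAbsorbing, ne_eq, Ideal.comap_eq_top_iff, Ideal.mem_comap, map_sub, map_add,
    map_mul, map_pow]
  refine and_congr_right fun _ ↦ ⟨fun h a b ↦ ?_, fun h a b ↦ h (f a) (f b)⟩
  obtain ⟨a, rfl⟩ := hf a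
  obtain ⟨b, rfl⟩ := hf b
  exact h a b

theorem stmt_17_general {R M : Type*} [CommRing R] [AddCommGroup M] [Module R M]
    [Module Rᵐᵒᵖ M] [IsCentralScalar R M] :
    IsCdfAbsorbing ((⊥ : Ideal R).comap (TrivSqZeroExt.fstHom R R M).toRingHom) ↔
      (∀ x : R, x ^ 3 = 0 → x ^ 2 = 0) ∧ IsCdfAbsorbing (⊥ : Ideal R) := by
  rw [isCdfAbsorbing_comap_iff_of_surjective TrivSqZeroExt.fst_surjective]
  exact ⟨fun h ↦ ⟨fun x hx ↦ h.sq_mem_of_pow_three_mem hx, h⟩, And.right⟩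

theorem stmt_17 {R M : Type*} [CommRing R] [Nontrivial R] [AddCommGroup M] [Module R M]
    [Module Rᵐᵒᵖ M] [IsCentralScalar R M] [Nontrivial M] :
    IsCdfAbsorbing ((⊥ : Ideal R).comap (TrivSqZeroExt.fstHom R R M).toRingHom) ↔
      (∀ x : R, x ^ 3 = 0 → x ^ 2 = 0) ∧ IsCdfAbsorbing (⊥ : Ideal R) :=
  stmt_17_general
end

section
/- Let p be a prime number with p ≠ 3. Then the ideal 3pℤ of the ring of integers ℤ is a cdf-absorbing ideal of ℤ. -/
section

variable {R : Type*} [CommRing R]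

theorem dvd_sub_of_three_dvd_pow_three_sub (h3 : Prime (3 : R)) {a b : R}
    (h : 3 ∣ a ^ 3 - b ^ 3) : 3 ∣ a - b := by
  have hcube : (a - b) ^ 3 = (a ^ 3 - b ^ 3) - 3 * (a * b * (a - b)) := by ring
  exact h3.dvd_of_dvd_pow (n := 3) (hcube ▸ dvd_sub h (dvd_mul_right _ _))

theorem three_dvd_sq_add_mul_add_sq {a b : R} (h : 3 ∣ a - b) : 3 ∣ a ^ 2 + a * b + b ^ 2 := by
  have hsum : a ^ 2 + a * b + b ^ 2 = (a - b) ^ 2 + 3 * (a * b) := by ring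
  exact hsum ▸ dvd_add (dvd_pow h two_ne_zero) (dvd_mul_right _ _)

theorem isCdfAbsorbing_span_three_mul {p : R} (h3 : Prime (3 : R)) (hp : Prime p)
    (hcop : IsCoprime 3 p) : IsCdfAbsorbing (Ideal.span {3 * p}) := by
  refine ⟨?_, fun a b hab => ?_⟩
  · rw [Ne, Ideal.span_singleton_eq_top]
    exact fun hunit => h3.not_isUnit (isUnit_of_mul_isUnit_left hunit)
  simp only [Ideal.mem_span_singleton] at hab ⊢
  have hfac : a ^ 3 - b ^ 3 = (a - b) * (a ^ 2 + a * b + b ^ 2) := by ring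
  have h3ab := dvd_sub_of_three_dvd_pow_three_sub h3 (dvd_of_mul_right_dvd hab)
  rcases hp.dvd_or_dvd (hfac ▸ dvd_of_mul_left_dvd hab) with hpab | hpsum
  · exact .inl (hcop.mul_dvd h3ab hpab)
  · exact .inr (hcop.mul_dvd (three_dvd_sq_add_mul_add_sq h3ab) hpsum)

end

theorem stmt_19 (p : ℕ) (hp : p.Prime) (hp3 : p ≠ 3) :
    IsCdfAbsorbing (Ideal.span {(3 * (p : ℤ))}) := by
  refine isCdfAbsorbing_span_three_mul Int.prime_three (Nat.prime_iff_prime_int.mp hp) ?_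
  rw [Int.isCoprime_iff_gcd_eq_one]
  exact_mod_cast (Nat.coprime_primes Nat.prime_three hp).mpr hp3.symm
end
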